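/- arXiv:1301.0104 — 3 statements merged into one kernel-verified Lean document; each statement's English description precedes it below -/
import Mathlib

section
/- Let ‖·‖_J and ‖·‖_M be norms on ℝⁿ, β_J, β_M < 1 constants, and A, B, D linear maps on ℝⁿ with ‖A y‖_J ≤ β_J ‖y‖_J and ‖B y‖_M ≤ β_M ‖y‖_M for all y. Then there exist α ∈ (0,1) and β < 1 such that the block lower-triangular map T(z_J, z_M) = (A z_J, D z_J + B z_M) satisfies α‖A z_J‖_J + (1−α)‖D z_J + B z_M‖_M ≤ β (α‖z_J‖_J + (1−α)‖z_M‖_M) for all (z_J, z_M) ∈ ℝⁿ × ℝⁿ; i.e., T is a contraction in the α-weighted norm ‖z‖_α = α‖z_J‖_J + (1−α)‖z_M‖_M. -/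
/-!
Norms on `ℝⁿ` are equivalent, so the off-diagonal block satisfies `‖D z‖_M ≤ C ‖z‖_J` for some
`C`. The map `T` is then dominated entrywise by the nonnegative lower-triangular matrix
`[[β_J, 0], [C, β_M]]`, and putting enough weight on the `J`-component makes the coupling `C`
cost less than the slack `1 - max β_J β_M` in the weighted `ℓ¹` norm.
-/

namespace Seminorm

variable {E : Type*} [NormedAddCommGroup E] [NormedSpace ℝ E] [FiniteDimensional ℝ E]

theorem continuous_of_finiteDimensional (p : Seminorm ℝ E) : Continuous p :=
  continuousOn_univ.mp (p.convexOn.continuousOn isOpen_univ)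

theorem exists_pos_mul_norm_le_of_definite (p : Seminorm ℝ E) (hp : ∀ x, p x = 0 → x = 0) :
    ∃ c, 0 < c ∧ ∀ x, c * ‖x‖ ≤ p x := by
  cases subsingleton_or_nontrivial E
  · exact ⟨1, one_pos, fun x => by simp [Subsingleton.elim x 0]⟩
  obtain ⟨x₀, hx₀, hmin⟩ := (isCompact_sphere (0 : E) 1).exists_isMinOn
    (NormedSpace.sphere_nonempty.mpr zero_le_one) p.continuous_of_finiteDimensional.continuousOn
  have hx₀_ne : x₀ ≠ 0 := ne_zero_of_mem_unit_sphere ⟨x₀, hx₀⟩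
  refine ⟨p x₀, (apply_nonneg p x₀).lt_of_ne' (mt (hp x₀) hx₀_ne), fun x => ?_⟩
  rcases eq_or_ne x 0 with rfl | hx
  · simp
  have hunit : ‖x‖⁻¹ • x ∈ Metric.sphere (0 : E) 1 := by
    simpa using norm_smul_inv_norm (𝕜 := ℝ) hx
  calc p x₀ * ‖x‖ ≤ p (‖x‖⁻¹ • x) * ‖x‖ := by gcongr; exact hmin hunit
    _ = p x := by
      rw [map_smul_eq_mul, Real.norm_eq_abs, abs_inv, abs_norm]
      field_simp

theorem exists_le_mul_of_definite (p q : Seminorm ℝ E) (hp : ∀ x, p x = 0 → x = 0) :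
    ∃ C, 0 ≤ C ∧ ∀ x, q x ≤ C * p x := by
  obtain ⟨c, hc, hcp⟩ := p.exists_pos_mul_norm_le_of_definite hp
  obtain ⟨K, hK, hKq⟩ := q.bound_of_continuous_normedSpace q.continuous_of_finiteDimensional
  refine ⟨K / c, by positivity, fun x => ?_⟩
  calc q x ≤ K * ‖x‖ := hKq x
    _ ≤ K * (p x / c) := by gcongr; rw [le_div_iff₀ hc]; linarith [hcp x]
    _ = K / c * p x := by ring

end Seminorm

theorem exists_weighted_contraction {a b C : ℝ} (ha : a < 1) (hb : b < 1) (hC : 0 ≤ C) :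
    ∃ α β : ℝ, 0 < α ∧ α < 1 ∧ β < 1 ∧ ∀ x y u v : ℝ, 0 ≤ x → 0 ≤ y →
      u ≤ a * x → v ≤ C * x + b * y → α * u + (1 - α) * v ≤ β * (α * x + (1 - α) * y) := by
  set γ := max a b
  have hγ : γ < 1 := max_lt ha hb
  set ε := (1 - γ) / 2
  have hε : 0 < ε := by simp only [ε]; linarith
  set α := (C + 1) / (C + 1 + ε)
  have hα : 0 < α := by positivity
  have hα' : 0 < 1 - α := by rw [sub_pos, div_lt_one (by positivity)]; linarith
  have hcoupling : (1 - α) * C ≤ ε * α := by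
    have : 1 - α = ε / (C + 1 + ε) := by simp only [α]; field_simp; ring
    rw [this, div_mul_eq_mul_div, mul_div_assoc', div_le_div_iff_of_pos_right (by positivity)]
    nlinarith
  refine ⟨α, γ + ε, hα, by linarith, by simp only [ε]; linarith, fun x y u v hx hy hu hv => ?_⟩
  have hax : a * x ≤ γ * x := by gcongr; exact le_max_left a b
  have hby : b * y ≤ γ * y := by gcongr; exact le_max_right a b
  calc α * u + (1 - α) * v ≤ α * (γ * x) + (1 - α) * (C * x + γ * y) := by
        gcongr
        · linarith
        · linarith
    _ ≤ α * (γ * x) + (ε * α * x + (1 - α) * γ * y) := by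
        nlinarith [mul_le_mul_of_nonneg_right hcoupling hx]
    _ ≤ (γ + ε) * (α * x + (1 - α) * y) := by
        nlinarith [mul_nonneg hε.le (mul_nonneg hα'.le hy)]

theorem stmt_4_general (n : ℕ)
    (nJ nM : (Fin n → ℝ) → ℝ)
    (hJ_add : ∀ u v, nJ (u + v) ≤ nJ u + nJ v)
    (hJ_smul : ∀ (c : ℝ) u, nJ (c • u) = |c| * nJ u)
    (hJ_def : ∀ u, nJ u = 0 → u = 0)
    (hM_add : ∀ u v, nM (u + v) ≤ nM u + nM v)
    (hM_smul : ∀ (c : ℝ) u, nM (c • u) = |c| * nM u)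
    (A B D : (Fin n → ℝ) →ₗ[ℝ] (Fin n → ℝ))
    (βJ βM : ℝ) (hβJ : βJ < 1) (hβM : βM < 1)
    (hA : ∀ y, nJ (A y) ≤ βJ * nJ y)
    (hB : ∀ y, nM (B y) ≤ βM * nM y) :
    ∃ α β : ℝ, 0 < α ∧ α < 1 ∧ β < 1 ∧
      ∀ zJ zM : Fin n → ℝ,
        α * nJ (A zJ) + (1 - α) * nM (D zJ + B zM) ≤
          β * (α * nJ zJ + (1 - α) * nM zM) := by
  let pJ : Seminorm ℝ (Fin n → ℝ) := .of nJ hJ_add fun c u => hJ_smul c u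
  let pM : Seminorm ℝ (Fin n → ℝ) := .of nM hM_add fun c u => hM_smul c u
  obtain ⟨C, hC, hD⟩ := pJ.exists_le_mul_of_definite (pM.comp D) hJ_def
  obtain ⟨α, β, hα₀, hα₁, hβ, hT⟩ := exists_weighted_contraction hβJ hβM hC
  refine ⟨α, β, hα₀, hα₁, hβ, fun zJ zM => hT _ _ _ _ (apply_nonneg pJ zJ) (apply_nonneg pM zM)
    (hA zJ) ?_⟩
  calc nM (D zJ + B zM) ≤ nM (D zJ) + nM (B zM) := hM_add _ _
    _ ≤ C * nJ zJ + βM * nM zM := add_le_add (hD zJ) (hB zM)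

/-- Given norms `‖·‖_J`, `‖·‖_M` on `ℝⁿ`, constants `β_J, β_M < 1`,
and linear maps `A, B, D` with `‖A y‖_J ≤ β_J ‖y‖_J` and `‖B y‖_M ≤ β_M ‖y‖_M`,
there exist `α ∈ (0,1)` and `β < 1` such that the block lower-triangular map
`T(z_J, z_M) = (A z_J, D z_J + B z_M)` is a `β`-contraction in the `α`-weighted
norm `‖z‖_α = α ‖z_J‖_J + (1-α) ‖z_M‖_M`. -/
theorem stmt_4 (n : ℕ)
    (nJ nM : (Fin n → ℝ) → ℝ)
    (hJ_add : ∀ u v, nJ (u + v) ≤ nJ u + nJ v)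
    (hJ_smul : ∀ (c : ℝ) u, nJ (c • u) = |c| * nJ u)
    (hJ_def : ∀ u, nJ u = 0 → u = 0)
    (hM_add : ∀ u v, nM (u + v) ≤ nM u + nM v)
    (hM_smul : ∀ (c : ℝ) u, nM (c • u) = |c| * nM u)
    (hM_def : ∀ u, nM u = 0 → u = 0)
    (A B D : (Fin n → ℝ) →ₗ[ℝ] (Fin n → ℝ))
    (βJ βM : ℝ) (hβJ : βJ < 1) (hβM : βM < 1)
    (hA : ∀ y, nJ (A y) ≤ βJ * nJ y)
    (hB : ∀ y, nM (B y) ≤ βM * nM y) :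
    ∃ α β : ℝ, 0 < α ∧ α < 1 ∧ β < 1 ∧
      ∀ zJ zM : Fin n → ℝ,
        α * nJ (A zJ) + (1 - α) * nM (D zJ + B zM) ≤
          β * (α * nJ zJ + (1 - α) * nM zM) :=
  stmt_4_general n nJ nM hJ_add hJ_smul hJ_def hM_add hM_smul A B D βJ βM hβJ hβM hA hB
end

section
/- Let Q = diag(q) with q(x) > 0, P a substochastic n×n matrix with q = ζ₀ᵀ + qᵀP (occupancy equation) arising from a proper policy, and Φ a full-column-rank n×l matrix. Then the matrix ΦᵀQ(I − P)Φ is invertible. -/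
/-! The quadratic form of `Q (I - P)` splits, through the occupancy equation, into the three
nonnegative sums `∑ q_x P_xy (v_x - v_y)²`, `∑ q_x (1 - ∑_y P_xy) v_x²` and `∑ ζ₀_y v_y²`.
If it vanished at some `v ≠ 0`, then `v` would be constant along the transitions of `P` and `P`
would be stochastic on the support of `v`; that support would then be a closed class on which
every power of `P` is stochastic, contradicting properness. Hence `vᵀ Q (I - P) v > 0` for
`v ≠ 0`, and the same holds for `Φᵀ Q (I - P) Φ` because `Φ` is injective. -/

open Matrix

theorem Matrix.isUnit_transpose_mul_mul_of_dotProduct_mulVec_pos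
    {R m k : Type*} [Field R] [Preorder R] [Fintype m] [Fintype k] [DecidableEq k]
    {A : Matrix m m R} (hA : ∀ v ≠ 0, 0 < v ⬝ᵥ A *ᵥ v)
    {Φ : Matrix m k R} (hΦ : Function.Injective Φ.mulVec) :
    IsUnit (Φᵀ * A * Φ) := by
  rw [isUnit_iff_isUnit_det, isUnit_iff_ne_zero, Ne, ← exists_mulVec_eq_zero_iff]
  rintro ⟨c, hc, hker⟩
  have hΦc : Φ *ᵥ c ≠ 0 := fun h => hc (hΦ (by rw [h, mulVec_zero]))
  have hform : c ⬝ᵥ (Φᵀ * A * Φ) *ᵥ c = (Φ *ᵥ c) ⬝ᵥ A *ᵥ Φ *ᵥ c := by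
    rw [← mulVec_mulVec, ← mulVec_mulVec, dotProduct_mulVec, vecMul_transpose]
  have hpos := hA _ hΦc
  rw [← hform, hker, dotProduct_zero] at hpos
  exact lt_irrefl 0 hpos

theorem Matrix.sum_pow_apply_eq_one_of_invariant {ι R : Type*} [Fintype ι] [DecidableEq ι]
    [Semiring R] {P : Matrix ι ι R} {S : Set ι} (hS : ∀ x ∈ S, ∀ y, P x y ≠ 0 → y ∈ S)
    (hP : ∀ x ∈ S, ∑ y, P x y = 1) (k : ℕ) : ∀ x ∈ S, ∑ y, (P ^ k) x y = 1 := by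
  induction k with
  | zero => intro x _; simp [one_apply]
  | succ k ih =>
    intro x hx
    calc ∑ y, (P ^ (k + 1)) x y = ∑ z, P x z * ∑ y, (P ^ k) z y := by
          simp only [pow_succ', mul_apply, Finset.mul_sum]; exact Finset.sum_comm
      _ = ∑ z, P x z := Finset.sum_congr rfl fun z _ => by
          by_cases hz : P x z = 0
          · simp [hz]
          · rw [ih z (hS x hx z hz), mul_one]
      _ = 1 := hP x hx

theorem Matrix.two_mul_dotProduct_diagonal_mul_one_sub_mulVec {ι R : Type*} [Fintype ι]
    [DecidableEq ι] [CommRing R] (P : Matrix ι ι R) {q ζ : ι → R}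
    (hocc : ∀ y, q y = ζ y + (q ᵥ* P) y) (v : ι → R) :
    2 * (v ⬝ᵥ (diagonal q * (1 - P)) *ᵥ v) =
      ∑ x, ∑ y, q x * P x y * (v x - v y) ^ 2 + ∑ x, q x * (1 - ∑ y, P x y) * v x ^ 2
        + ∑ y, ζ y * v y ^ 2 := by
  have hζ : ∀ y, ζ y = q y - ∑ x, q x * P x y := fun y => by
    rw [eq_sub_iff_add_eq, hocc y]; rfl
  have hform : v ⬝ᵥ (diagonal q * (1 - P)) *ᵥ v
      = ∑ x, q x * v x ^ 2 - ∑ x, ∑ y, q x * P x y * (v x * v y) := by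
    rw [mul_sub, mul_one, sub_mulVec, dotProduct_sub, ← mulVec_mulVec]
    simp only [dotProduct, mulVec_diagonal]
    simp only [mulVec, dotProduct, Finset.mul_sum]
    congr 1
    · exact Finset.sum_congr rfl fun x _ => by ring
    · exact Finset.sum_congr rfl fun x _ => Finset.sum_congr rfl fun y _ => by ring
  have hout : ∑ x, q x * (1 - ∑ y, P x y) * v x ^ 2
      = ∑ x, q x * v x ^ 2 - ∑ x, ∑ y, q x * P x y * v x ^ 2 := by
    simp only [mul_sub, sub_mul, Finset.sum_sub_distrib, Finset.mul_sum, Finset.sum_mul, mul_one]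
  have hin : ∑ y, ζ y * v y ^ 2 = ∑ x, q x * v x ^ 2 - ∑ x, ∑ y, q x * P x y * v y ^ 2 := by
    simp only [hζ, sub_mul, Finset.sum_sub_distrib, Finset.sum_mul]
    rw [Finset.sum_comm (f := fun y x => q x * P x y * v y ^ 2)]
  have hsq : ∑ x, ∑ y, q x * P x y * (v x - v y) ^ 2
      = ∑ x, ∑ y, q x * P x y * v x ^ 2 - 2 * ∑ x, ∑ y, q x * P x y * (v x * v y)
        + ∑ x, ∑ y, q x * P x y * v y ^ 2 := by
    simp only [Finset.mul_sum, ← Finset.sum_sub_distrib, ← Finset.sum_add_distrib]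
    exact Finset.sum_congr rfl fun x _ => Finset.sum_congr rfl fun y _ => by ring
  rw [hform, hout, hin, hsq]
  ring

theorem Matrix.dotProduct_diagonal_mul_one_sub_mulVec_pos {ι R : Type*} [Fintype ι]
    [DecidableEq ι] [CommRing R] [LinearOrder R] [IsStrictOrderedRing R]
    {P : Matrix ι ι R} {q ζ : ι → R}
    (hP0 : ∀ x y, 0 ≤ P x y) (hP1 : ∀ x, ∑ y, P x y ≤ 1) {k : ℕ}
    (hproper : ∀ x, ∑ y, (P ^ k) x y < 1) (hζ : ∀ x, 0 ≤ ζ x) (hq : ∀ x, 0 < q x)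
    (hocc : ∀ y, q y = ζ y + (q ᵥ* P) y) {v : ι → R} (hv : v ≠ 0) :
    0 < v ⬝ᵥ (diagonal q * (1 - P)) *ᵥ v := by
  have hjump : ∀ x y, 0 ≤ q x * P x y * (v x - v y) ^ 2 := fun x y =>
    mul_nonneg (mul_nonneg (hq x).le (hP0 x y)) (sq_nonneg _)
  have hdefect : ∀ x, 0 ≤ q x * (1 - ∑ y, P x y) * v x ^ 2 := fun x =>
    mul_nonneg (mul_nonneg (hq x).le (sub_nonneg.mpr (hP1 x))) (sq_nonneg _)
  have hentry : ∀ y, 0 ≤ ζ y * v y ^ 2 := fun y => mul_nonneg (hζ y) (sq_nonneg _)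
  by_contra! hle
  have hsum := two_mul_dotProduct_diagonal_mul_one_sub_mulVec P hocc v
  have hjump_sum : 0 ≤ ∑ x, ∑ y, q x * P x y * (v x - v y) ^ 2 :=
    Finset.sum_nonneg fun x _ => Finset.sum_nonneg fun y _ => hjump x y
  have hdefect_sum : 0 ≤ ∑ x, q x * (1 - ∑ y, P x y) * v x ^ 2 :=
    Finset.sum_nonneg fun x _ => hdefect x
  have hentry_sum : 0 ≤ ∑ y, ζ y * v y ^ 2 := Finset.sum_nonneg fun y _ => hentry y
  have hjump0 : ∑ x, ∑ y, q x * P x y * (v x - v y) ^ 2 = 0 := by linarith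
  have hdefect0 : ∑ x, q x * (1 - ∑ y, P x y) * v x ^ 2 = 0 := by linarith
  have hconst : ∀ x y, P x y ≠ 0 → v x = v y := by
    intro x y hxy
    have h := (Finset.sum_eq_zero_iff_of_nonneg fun y _ => hjump x y).mp
      ((Finset.sum_eq_zero_iff_of_nonneg fun x _ =>
        Finset.sum_nonneg fun y _ => hjump x y).mp hjump0 x (Finset.mem_univ x)) y
      (Finset.mem_univ y)
    simpa [(hq x).ne', hxy, sub_eq_zero] using h
  have hstoch : ∀ x, v x ≠ 0 → ∑ y, P x y = 1 := by
    intro x hx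
    have h := (Finset.sum_eq_zero_iff_of_nonneg fun x _ => hdefect x).mp hdefect0 x
      (Finset.mem_univ x)
    exact (sub_eq_zero.mp (by simpa [(hq x).ne', hx] using h)).symm
  obtain ⟨x₀, hx₀⟩ := Function.ne_iff.mp hv
  have hpow := sum_pow_apply_eq_one_of_invariant (S := {x | v x ≠ 0})
    (fun x hx y hxy => show v y ≠ 0 from hconst x y hxy ▸ hx) hstoch k x₀ hx₀
  exact (hproper x₀).ne hpow

/-- Let `Q = diag(q)` with `q > 0` the occupancy vector of a proper SSP
policy with initial distribution `ζ₀` (so `qᵀ = ζ₀ᵀ + qᵀ P`), `P` substochastic and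
proper, and `Φ` an `n×l` matrix with linearly independent columns. Then
`Φᵀ Q (I − P) Φ` is invertible. -/
theorem stmt_11 (n l : ℕ) (P : Matrix (Fin n) (Fin n) ℝ)
    (q ζ₀ : Fin n → ℝ)
    (hP0 : ∀ x y, 0 ≤ P x y)
    (hP1 : ∀ x, ∑ y, P x y ≤ 1)
    (hproper : ∀ x, ∑ y, (P ^ n) x y < 1)
    (hζ0 : ∀ x, 0 ≤ ζ₀ x)
    (hq_pos : ∀ x, 0 < q x)
    (hocc : ∀ y, q y = ζ₀ y + P.vecMul q y)
    (Φ : Matrix (Fin n) (Fin l) ℝ)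
    (hΦ : LinearIndependent ℝ (fun j : Fin l => fun i : Fin n => Φ i j)) :
    IsUnit (Φᵀ * Matrix.diagonal q * (1 - P) * Φ) := by
  rw [Matrix.mul_assoc Φᵀ]
  exact isUnit_transpose_mul_mul_of_dotProduct_mulVec_pos
    (fun v hv => dotProduct_diagonal_mul_one_sub_mulVec_pos hP0 hP1 hproper hζ0 hq_pos hocc hv)
    (mulVec_injective_iff.mpr hΦ)
end

section
/- Let P be a substochastic matrix of a proper SSP policy and q its positive occupancy vector satisfying qᵀ = ζ₀ᵀ + qᵀP, and let Π be the q-weighted orthogonal projection onto a subspace S of ℝⁿ. For λ ∈ (0,1), define P^{(λ)} = (1−λ) ∑_{l=0}^∞ λ^l P^{l+1}. If ‖Π P y‖_q ≤ β ‖y‖_q for all y with β < 1 (single-step contraction in the q-norm), then ‖Π P^{(λ)} y‖_q ≤ β^{(λ)} ‖y‖_q with β^{(λ)} = (1−λ)β/(1−λβ) < 1; in particular Π P^{(λ)} is a contraction in ‖·‖_q. -/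
/-!
Write `‖v‖_q = √(∑ q x v x²)`. Since `‖P v‖_q ≤ β ‖v‖_q`, each term of
`P^{(λ)} y = ∑ (1-λ) λ^l P^{l+1} y` has `q`-norm at most `(1-λ) λ^l β^{l+1} ‖y‖_q`, and these
bounds form a geometric series with sum `β^{(λ)} ‖y‖_q`; the nonexpansive `Π` does not increase
the norm. The series estimate is transported to `EuclideanSpace` by the isometry `v ↦ √q ⊙ v`.
-/

open Matrix

theorem Matrix.hasSum_mulVec {m n R : Type*} [Fintype n] [NonUnitalNonAssocSemiring R]
    [TopologicalSpace R] [IsTopologicalSemiring R] {A : ℕ → Matrix m n R} {B : Matrix m n R}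
    (h : ∀ x y, HasSum (fun l => A l x y) (B x y)) (v : n → R) :
    HasSum (fun l => A l *ᵥ v) (B *ᵥ v) :=
  Pi.hasSum.2 fun x => hasSum_sum fun y _ => (h x y).mul_right (v y)

theorem hasSum_lambda_geometric {lam β : ℝ} (hlam : 0 ≤ lam) (hβ : 0 ≤ β) (hlamβ : lam * β < 1) :
    HasSum (fun l : ℕ => (1 - lam) * lam ^ l * β ^ (l + 1)) ((1 - lam) * β / (1 - lam * β)) := by
  have hterm : (fun l : ℕ => (1 - lam) * lam ^ l * β ^ (l + 1)) =
      fun l => (1 - lam) * β * (lam * β) ^ l := funext fun l => by ring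
  rw [hterm, div_eq_mul_inv]
  exact (hasSum_geometric_of_lt_one (mul_nonneg hlam hβ) hlamβ).mul_left _

theorem lambda_contraction_lt_one {lam β : ℝ} (hlamβ : lam * β < 1) (hβ : β < 1) :
    (1 - lam) * β / (1 - lam * β) < 1 := by
  rw [div_lt_one (by linarith)]
  linarith

section WeightedNorm

variable {ι : Type*} [Fintype ι]

noncomputable def qNorm (q v : ι → ℝ) : ℝ := √(∑ x, q x * v x ^ 2)

theorem qNorm_smul (q : ι → ℝ) (c : ℝ) (v : ι → ℝ) : qNorm q (c • v) = |c| * qNorm q v := by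
  have hsum : ∑ x, q x * (c • v) x ^ 2 = c ^ 2 * ∑ x, q x * v x ^ 2 := by
    rw [Finset.mul_sum]
    exact Finset.sum_congr rfl fun x _ => by simp only [Pi.smul_apply, smul_eq_mul]; ring
  rw [qNorm, qNorm, hsum, Real.sqrt_mul (sq_nonneg c), Real.sqrt_sq_eq_abs]

noncomputable def weightedEmbedding (q : ι → ℝ) : (ι → ℝ) →L[ℝ] EuclideanSpace ℝ ι :=
  (EuclideanSpace.equiv ι ℝ).symm.toContinuousLinearMap ∘L
    ContinuousLinearMap.pi fun x => √(q x) • ContinuousLinearMap.proj x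

theorem qNorm_eq_norm_weightedEmbedding {q : ι → ℝ} (hq : ∀ x, 0 ≤ q x) (v : ι → ℝ) :
    qNorm q v = ‖weightedEmbedding q v‖ := by
  rw [EuclideanSpace.norm_eq, qNorm]
  congr 1
  refine Finset.sum_congr rfl fun x _ => ?_
  simp [weightedEmbedding, mul_pow, Real.sq_sqrt (hq x)]

theorem qNorm_le_of_hasSum {q : ι → ℝ} (hq : ∀ x, 0 ≤ q x) {f : ℕ → ι → ℝ} {a : ι → ℝ}
    {g : ℕ → ℝ} {b : ℝ} (hf : HasSum f a) (hg : HasSum g b) (h : ∀ l, qNorm q (f l) ≤ g l) :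
    qNorm q a ≤ b := by
  simp only [qNorm_eq_norm_weightedEmbedding hq] at h ⊢
  exact ((weightedEmbedding q).hasSum hf).norm_le_of_bounded hg h

theorem qNorm_pow_mulVec_le [DecidableEq ι] {q : ι → ℝ} {P : Matrix ι ι ℝ} {β : ℝ} (hβ : 0 ≤ β)
    (hP : ∀ v, qNorm q (P *ᵥ v) ≤ β * qNorm q v) (l : ℕ) (v : ι → ℝ) :
    qNorm q (P ^ l *ᵥ v) ≤ β ^ l * qNorm q v := by
  induction l with
  | zero => simp
  | succ l ih =>
    calc qNorm q (P ^ (l + 1) *ᵥ v) = qNorm q (P *ᵥ (P ^ l *ᵥ v)) := by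
          rw [pow_succ', mulVec_mulVec]
      _ ≤ β * (β ^ l * qNorm q v) := (hP _).trans (mul_le_mul_of_nonneg_left ih hβ)
      _ = β ^ (l + 1) * qNorm q v := by ring

theorem qNorm_mulVec_le_of_hasSum_lambda [DecidableEq ι] {q : ι → ℝ} (hq : ∀ x, 0 ≤ q x)
    {P Plam : Matrix ι ι ℝ} {lam β : ℝ} (hlam0 : 0 ≤ lam) (hlam1 : lam < 1) (hβ0 : 0 ≤ β)
    (hβ1 : β ≤ 1) (hP : ∀ v, qNorm q (P *ᵥ v) ≤ β * qNorm q v)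
    (hPlam : ∀ x y, HasSum (fun l : ℕ => (1 - lam) * lam ^ l * (P ^ (l + 1)) x y) (Plam x y))
    (y : ι → ℝ) :
    qNorm q (Plam *ᵥ y) ≤ (1 - lam) * β / (1 - lam * β) * qNorm q y := by
  have hterms : HasSum (fun l : ℕ => ((1 - lam) * lam ^ l) • (P ^ (l + 1) *ᵥ y)) (Plam *ᵥ y) := by
    simpa only [smul_mulVec] using
      hasSum_mulVec (A := fun l => ((1 - lam) * lam ^ l) • P ^ (l + 1)) hPlam y
  refine qNorm_le_of_hasSum hq hterms
    ((hasSum_lambda_geometric hlam0 hβ0 (by nlinarith)).mul_right (qNorm q y)) fun l => ?_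
  have hc : 0 ≤ (1 - lam) * lam ^ l := mul_nonneg (by linarith) (pow_nonneg hlam0 l)
  rw [qNorm_smul, abs_of_nonneg hc, mul_assoc _ _ (qNorm q y)]
  exact mul_le_mul_of_nonneg_left (qNorm_pow_mulVec_le hβ0 hP _ y) hc

end WeightedNorm

theorem stmt_17_general (n : ℕ) (P : Matrix (Fin n) (Fin n) ℝ)
    (q : Fin n → ℝ) (β lam : ℝ)
    (hq_pos : ∀ x, 0 < q x)
    (hlam0 : 0 < lam) (hlam1 : lam < 1)
    (hβ0 : 0 ≤ β) (hβ1 : β < 1)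
    (Pi : (Fin n → ℝ) →ₗ[ℝ] (Fin n → ℝ))
    (hPi_ne : ∀ y : Fin n → ℝ,
      Real.sqrt (∑ x, q x * Pi y x ^ 2) ≤ Real.sqrt (∑ x, q x * y x ^ 2))
    (hP_contr : ∀ y : Fin n → ℝ,
      Real.sqrt (∑ x, q x * P.mulVec y x ^ 2) ≤ β * Real.sqrt (∑ x, q x * y x ^ 2))
    (Plam : Matrix (Fin n) (Fin n) ℝ)
    (hPlam : ∀ x y, HasSum (fun l : ℕ => (1 - lam) * lam ^ l * (P ^ (l + 1)) x y)
      (Plam x y)) :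
    (1 - lam) * β / (1 - lam * β) < 1 ∧
      ∀ y : Fin n → ℝ,
        Real.sqrt (∑ x, q x * Pi (Plam.mulVec y) x ^ 2) ≤
          ((1 - lam) * β / (1 - lam * β)) * Real.sqrt (∑ x, q x * y x ^ 2) :=
  ⟨lambda_contraction_lt_one (by nlinarith) hβ1, fun y =>
    (hPi_ne _).trans <| qNorm_mulVec_le_of_hasSum_lambda (fun x => (hq_pos x).le) hlam0.le hlam1
      hβ0 hβ1.le hP_contr hPlam y⟩

/-- Let `P` be the substochastic matrix of a proper SSP policy with positive
occupancy vector `q` (`qᵀ = ζ₀ᵀ + qᵀ P`), and `Π` a linear map on `ℝⁿ` that is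
nonexpansive in the `q`-weighted norm (a `q`-orthogonal projection onto a subspace).
For `λ ∈ (0,1)` define `P^{(λ)} = (1−λ) ∑_{l≥0} λ^l P^{l+1}` (entrywise). If `P` is a
`β`-contraction in `‖·‖_q` (so in particular `‖Π P y‖_q ≤ β ‖y‖_q`) with `β < 1`, then
`‖Π P^{(λ)} y‖_q ≤ β^{(λ)} ‖y‖_q` where `β^{(λ)} = (1−λ)β/(1−λβ) < 1`. -/
theorem stmt_17 (n : ℕ) (P : Matrix (Fin n) (Fin n) ℝ)
    (q ζ₀ : Fin n → ℝ) (β lam : ℝ)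
    (hP0 : ∀ x y, 0 ≤ P x y)
    (hP1 : ∀ x, ∑ y, P x y ≤ 1)
    (hζ0 : ∀ x, 0 ≤ ζ₀ x)
    (hq_pos : ∀ x, 0 < q x)
    (hocc : ∀ y, q y = ζ₀ y + P.vecMul q y)
    (hlam0 : 0 < lam) (hlam1 : lam < 1)
    (hβ0 : 0 ≤ β) (hβ1 : β < 1)
    (Pi : (Fin n → ℝ) →ₗ[ℝ] (Fin n → ℝ))
    (hPi_proj : ∀ y, Pi (Pi y) = Pi y)
    (hPi_ne : ∀ y : Fin n → ℝ,
      Real.sqrt (∑ x, q x * Pi y x ^ 2) ≤ Real.sqrt (∑ x, q x * y x ^ 2))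
    (hP_contr : ∀ y : Fin n → ℝ,
      Real.sqrt (∑ x, q x * P.mulVec y x ^ 2) ≤ β * Real.sqrt (∑ x, q x * y x ^ 2))
    (hPiP_contr : ∀ y : Fin n → ℝ,
      Real.sqrt (∑ x, q x * Pi (P.mulVec y) x ^ 2) ≤ β * Real.sqrt (∑ x, q x * y x ^ 2))
    (Plam : Matrix (Fin n) (Fin n) ℝ)
    (hPlam : ∀ x y, HasSum (fun l : ℕ => (1 - lam) * lam ^ l * (P ^ (l + 1)) x y)
      (Plam x y)) :
    (1 - lam) * β / (1 - lam * β) < 1 ∧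
      ∀ y : Fin n → ℝ,
        Real.sqrt (∑ x, q x * Pi (Plam.mulVec y) x ^ 2) ≤
          ((1 - lam) * β / (1 - lam * β)) * Real.sqrt (∑ x, q x * y x ^ 2) :=
  stmt_17_general n P q β lam hq_pos hlam0 hlam1 hβ0 hβ1 Pi hPi_ne hP_contr Plam hPlam
end
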